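/- Let A = (a_ij) ∈ {0,1}^{n×n} be the symmetric adjacency matrix of a μ-dense network with zero diagonal and K > 0. Suppose θ ∈ ℝⁿ is an equilibrium of the Kuramoto model with frequencies ω ((K/n) Σⱼ a_ij sin(θᵢ − θⱼ) = ωᵢ for all i) and J(θ) is positive semidefinite, and suppose (2μ − 3/2)n² + 2(1 − μ)n > 0. Then with ψ the phase of the order parameter r(θ) = Σⱼ e^{iθⱼ}, for every index i: |sin(θᵢ − ψ)| ≤ (n K⁻¹ ‖ω‖_∞ + (1 − μ)(n − 1)) / √((2μ − 3/2)n² + 2(1 − μ)n). -/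

import Mathlib

/-!
Write `r = ∑ j, exp (θ j * I) = ρ e^{iψ}`. Then `∑ k, sin (θ i - θ k) = ρ sin (θ i - ψ)`,
and at an equilibrium this sum differs from `(n / K) ω i` only by the terms of the
non-neighbours of `i`, at most `(1 - μ)(n - 1)` in absolute value. It remains to bound `ρ²`
from below. Testing `J(θ) ⪰ 0` against `cos θ` and `sin θ` gives
`∑ a_jk cos² (θ j - θ k) ≤ ∑ a_jk cos (θ j - θ k)`. By the double-angle formula and
`‖∑ j, exp (2 θ j I)‖² ≥ 0` the left side is at least `E - n² / 2`, where
`E = ∑ a_jk ≥ μ n (n - 1)`, while `ρ² = ∑ cos (θ j - θ k)` exceeds the right side by at least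
`E + 2n - n²`, since each non-edge contributes at least `-1`.
-/

open Real Finset

noncomputable section

def kuraJ {n : ℕ} (A : Matrix (Fin n) (Fin n) ℝ) (θ : Fin n → ℝ) :
    Matrix (Fin n) (Fin n) ℝ :=
  Matrix.of fun i j =>
    if i = j then ∑ k, A i k * Real.cos (θ i - θ k)
    else -(A i j * Real.cos (θ i - θ j))

section OrderParameter

variable {ι : Type*} [Fintype ι] (θ : ι → ℝ)

lemma re_sum_exp_mul_I : (∑ j, Complex.exp (θ j * Complex.I)).re = ∑ j, cos (θ j) := by
  simp only [Complex.re_sum, Complex.exp_ofReal_mul_I_re]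

lemma im_sum_exp_mul_I : (∑ j, Complex.exp (θ j * Complex.I)).im = ∑ j, sin (θ j) := by
  simp only [Complex.im_sum, Complex.exp_ofReal_mul_I_im]

lemma norm_sum_exp_mul_I_sq :
    ‖∑ j, Complex.exp (θ j * Complex.I)‖ ^ 2 = ∑ j, ∑ k, cos (θ j - θ k) := by
  rw [Complex.sq_norm, Complex.normSq_apply, re_sum_exp_mul_I, im_sum_exp_mul_I,
    Finset.sum_mul_sum, Finset.sum_mul_sum, ← Finset.sum_add_distrib]
  refine Finset.sum_congr rfl fun j _ => ?_
  rw [← Finset.sum_add_distrib]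
  exact Finset.sum_congr rfl fun k _ => (cos_sub _ _).symm

lemma sum_sin_sub_eq_sin_sub_arg_mul_norm (i : ι) :
    ∑ k, sin (θ i - θ k) =
      sin (θ i - (∑ j, Complex.exp (θ j * Complex.I)).arg) *
        ‖∑ j, Complex.exp (θ j * Complex.I)‖ := by
  set r := ∑ j, Complex.exp (θ j * Complex.I)
  have hre : ‖r‖ * cos r.arg = ∑ k, cos (θ k) := r.norm_mul_cos_arg.trans (re_sum_exp_mul_I θ)
  have him : ‖r‖ * sin r.arg = ∑ k, sin (θ k) := r.norm_mul_sin_arg.trans (im_sum_exp_mul_I θ)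
  simp only [sin_sub, Finset.sum_sub_distrib, ← Finset.mul_sum, ← hre, ← him]
  ring

end OrderParameter

section WeightedCosineSums

variable {ι : Type*} [Fintype ι] (A : Matrix ι ι ℝ) (θ : ι → ℝ)

lemma sum_sub_card_sq_div_two_le_sum_mul_cos_sq (hA : ∀ j k, A j k ∈ Set.Icc (0 : ℝ) 1) :
    ∑ j, ∑ k, A j k - (Fintype.card ι : ℝ) ^ 2 / 2 ≤
      ∑ j, ∑ k, A j k * cos (θ j - θ k) ^ 2 := by
  have hentry : ∀ j k,
      A j k - 1 / 2 + cos (2 * θ j - 2 * θ k) / 2 ≤ A j k * cos (θ j - θ k) ^ 2 := by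
    intro j k
    obtain ⟨h0, h1⟩ := hA j k
    -- the gap is `(1 - A j k) (1 - cos (2 (θ j - θ k))) / 2`
    rw [cos_sq, mul_sub]
    nlinarith [cos_le_one (2 * θ j - 2 * θ k)]
  have hharm : 0 ≤ ∑ j, ∑ k, cos (2 * θ j - 2 * θ k) :=
    norm_sum_exp_mul_I_sq (fun j => 2 * θ j) ▸ sq_nonneg _
  calc ∑ j, ∑ k, A j k - (Fintype.card ι : ℝ) ^ 2 / 2
      ≤ ∑ j, ∑ k, (A j k - 1 / 2 + cos (2 * θ j - 2 * θ k) / 2) := by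
        simp only [Finset.sum_add_distrib, Finset.sum_sub_distrib, ← Finset.sum_div,
          Finset.sum_const, Finset.card_univ, nsmul_eq_mul]
        linarith
    _ ≤ _ := Finset.sum_le_sum fun j _ => Finset.sum_le_sum fun k _ => hentry j k

lemma sum_mul_cos_sub_le_norm_sum_exp_sq_add (hA : ∀ j k, A j k ∈ Set.Icc (0 : ℝ) 1)
    (hdiag : ∀ j, A j j = 0) :
    ∑ j, ∑ k, A j k * cos (θ j - θ k) ≤
      ‖∑ j, Complex.exp (θ j * Complex.I)‖ ^ 2 + (Fintype.card ι : ℝ) ^ 2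
        - 2 * Fintype.card ι - ∑ j, ∑ k, A j k := by
  classical
  have hentry : ∀ j k, A j k * cos (θ j - θ k) + A j k - 1 + (if j = k then 2 else 0) ≤
      cos (θ j - θ k) := by
    intro j k
    split_ifs with hjk
    · subst hjk; norm_num [hdiag]
    · obtain ⟨h0, h1⟩ := hA j k
      nlinarith [neg_one_le_cos (θ j - θ k)]
  have hsum := Finset.sum_le_sum fun j (_ : j ∈ univ) =>
    Finset.sum_le_sum fun k (_ : k ∈ univ) => hentry j k
  simp only [Finset.sum_add_distrib, Finset.sum_sub_distrib, Finset.sum_ite_eq, Finset.mem_univ,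
    if_true, Finset.sum_const, Finset.card_univ, nsmul_eq_mul] at hsum
  rw [norm_sum_exp_mul_I_sq]
  linarith

lemma abs_sum_one_sub_mul_sin_sub_le [DecidableEq ι]
    (hA : ∀ j k, A j k ∈ Set.Icc (0 : ℝ) 1) (hdiag : ∀ j, A j j = 0) (i : ι) :
    |∑ k, (1 - A i k) * sin (θ i - θ k)| ≤ Fintype.card ι - 1 - ∑ k, A i k := by
  calc |∑ k, (1 - A i k) * sin (θ i - θ k)|
      ≤ ∑ k, |(1 - A i k) * sin (θ i - θ k)| := Finset.abs_sum_le_sum_abs _ _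
    _ ≤ ∑ k, (1 - A i k - if i = k then 1 else 0) := by
        refine Finset.sum_le_sum fun k _ => ?_
        split_ifs with hik
        · subst hik; simp [hdiag]
        · have hnonedge : 0 ≤ 1 - A i k := sub_nonneg.2 (hA i k).2
          rw [abs_mul, abs_of_nonneg hnonedge, sub_zero]
          exact mul_le_of_le_one_right hnonedge (abs_sin_le_one _)
    _ = Fintype.card ι - 1 - ∑ k, A i k := by
        simp only [Finset.sum_sub_distrib, Finset.sum_ite_eq, Finset.mem_univ, if_true,
          Finset.sum_const, Finset.card_univ, nsmul_eq_mul, mul_one]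
        ring

end WeightedCosineSums

section KuramotoJacobian

open Matrix

variable {n : ℕ} (A : Matrix (Fin n) (Fin n) ℝ) (θ : Fin n → ℝ)

lemma dotProduct_kuraJ_mulVec (hdiag : ∀ j, A j j = 0) (x : Fin n → ℝ) :
    x ⬝ᵥ (kuraJ A θ *ᵥ x) = ∑ j, ∑ k, A j k * cos (θ j - θ k) * (x j * x j - x j * x k) := by
  refine Finset.sum_congr rfl fun j _ => ?_
  have hrow : (kuraJ A θ *ᵥ x) j = ∑ k, A j k * cos (θ j - θ k) * (x j - x k) := by
    have hentry : ∀ k, kuraJ A θ j k * x k =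
        (if j = k then (∑ l, A j l * cos (θ j - θ l)) * x j else 0) -
          A j k * cos (θ j - θ k) * x k := by
      intro k
      by_cases hjk : j = k
      · subst hjk; simp [kuraJ, hdiag]
      · simp [kuraJ, hjk]
    simp only [mulVec, dotProduct, hentry, Finset.sum_sub_distrib, Finset.sum_ite_eq,
      Finset.mem_univ, if_true, Finset.sum_mul, mul_sub]
  rw [hrow, Finset.mul_sum]
  exact Finset.sum_congr rfl fun k _ => by ring

lemma sum_mul_cos_sq_le_of_posSemidef (hdiag : ∀ j, A j j = 0)
    (hpsd : (kuraJ A θ).PosSemidef) :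
    ∑ j, ∑ k, A j k * cos (θ j - θ k) ^ 2 ≤ ∑ j, ∑ k, A j k * cos (θ j - θ k) := by
  have hcos := hpsd.dotProduct_mulVec_nonneg (fun j => cos (θ j))
  have hsin := hpsd.dotProduct_mulVec_nonneg (fun j => sin (θ j))
  rw [star_trivial, dotProduct_kuraJ_mulVec A θ hdiag] at hcos hsin
  have hentry : ∀ j k,
      A j k * cos (θ j - θ k) * (cos (θ j) * cos (θ j) - cos (θ j) * cos (θ k)) +
        A j k * cos (θ j - θ k) * (sin (θ j) * sin (θ j) - sin (θ j) * sin (θ k)) =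
      A j k * cos (θ j - θ k) - A j k * cos (θ j - θ k) ^ 2 := by
    intro j k
    linear_combination
      A j k * cos (θ j - θ k) * (sin_sq_add_cos_sq (θ j) + cos_sub (θ j) (θ k))
  have hsum := add_nonneg hcos hsin
  simp only [← Finset.sum_add_distrib, hentry, Finset.sum_sub_distrib] at hsum
  linarith

lemma two_mul_sum_sub_le_norm_sum_exp_sq (hA : ∀ j k, A j k ∈ Set.Icc (0 : ℝ) 1)
    (hdiag : ∀ j, A j j = 0) (hpsd : (kuraJ A θ).PosSemidef) :
    2 * ∑ j, ∑ k, A j k - 3 / 2 * (n : ℝ) ^ 2 + 2 * n ≤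
      ‖∑ j, Complex.exp (θ j * Complex.I)‖ ^ 2 := by
  have hsq := sum_sub_card_sq_div_two_le_sum_mul_cos_sq A θ hA
  have hpsd' := sum_mul_cos_sq_le_of_posSemidef A θ hdiag hpsd
  have hnorm := sum_mul_cos_sub_le_norm_sum_exp_sq_add A θ hA hdiag
  rw [Fintype.card_fin] at hsq hnorm
  linarith

end KuramotoJacobian

lemma abs_sum_sin_sub_le_of_equilibrium {ι : Type*} [Fintype ι] [DecidableEq ι]
    (A : Matrix ι ι ℝ) (hA : ∀ j k, A j k ∈ Set.Icc (0 : ℝ) 1) (hdiag : ∀ j, A j j = 0)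
    {K : ℝ} (hK : 0 < K) (θ : ι → ℝ) (i : ι) {ω : ℝ}
    (heq : K / Fintype.card ι * ∑ k, A i k * sin (θ i - θ k) = ω) :
    |∑ k, sin (θ i - θ k)| ≤
      Fintype.card ι * K⁻¹ * |ω| + (Fintype.card ι - 1 - ∑ k, A i k) := by
  have hcard : (0 : ℝ) < Fintype.card ι := Nat.cast_pos.2 (Fintype.card_pos_iff.2 ⟨i⟩)
  have hsplit : ∑ k, sin (θ i - θ k) =
      Fintype.card ι * K⁻¹ * ω + ∑ k, (1 - A i k) * sin (θ i - θ k) := by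
    rw [← heq]
    field_simp
    simp only [sub_mul, one_mul, Finset.sum_sub_distrib]
    ring
  rw [hsplit]
  refine (abs_add_le _ _).trans
    (add_le_add (le_of_eq ?_) (abs_sum_one_sub_mul_sin_sub_le A θ hA hdiag i))
  rw [abs_mul, abs_of_pos (by positivity)]

theorem sin_phase_deviation_bound_general
    (n : ℕ) (A : Matrix (Fin n) (Fin n) ℝ)
    (hA01 : ∀ i j, A i j = 0 ∨ A i j = 1) (hAdiag : ∀ i, A i i = 0)
    (μ : ℝ)
    (hdense : ∀ i, μ * ((n : ℝ) - 1) ≤ ∑ j, A i j)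
    (K : ℝ) (hK : 0 < K) (ω : Fin n → ℝ)
    (θ : Fin n → ℝ)
    (heq : ∀ i, (K / n) * ∑ j, A i j * Real.sin (θ i - θ j) = ω i)
    (hpsd : (kuraJ A θ).PosSemidef)
    (hpos : 0 < (2 * μ - 3 / 2) * (n : ℝ) ^ 2 + 2 * (1 - μ) * n) :
    ∀ i,
      |Real.sin (θ i - (∑ j, Complex.exp ((θ j : ℂ) * Complex.I)).arg)| ≤
        ((n : ℝ) * K⁻¹ * ‖ω‖ + (1 - μ) * ((n : ℝ) - 1)) /
          Real.sqrt ((2 * μ - 3 / 2) * (n : ℝ) ^ 2 + 2 * (1 - μ) * n) := by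
  intro i
  set r := ∑ j, Complex.exp ((θ j : ℂ) * Complex.I)
  have hA : ∀ j k, A j k ∈ Set.Icc (0 : ℝ) 1 := fun j k => by
    rcases hA01 j k with h | h <;> simp [h]
  have hedges : (n : ℝ) * (μ * ((n : ℝ) - 1)) ≤ ∑ j, ∑ k, A j k := by
    simpa using Finset.card_nsmul_le_sum univ _ _ fun j _ => hdense j
  have hr : √((2 * μ - 3 / 2) * (n : ℝ) ^ 2 + 2 * (1 - μ) * n) ≤ ‖r‖ := by
    rw [Real.sqrt_le_left (norm_nonneg r)]
    linarith [two_mul_sum_sub_le_norm_sum_exp_sq A θ hA hAdiag hpsd]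
  have hi : |sin (θ i - r.arg)| * ‖r‖ ≤ (n : ℝ) * K⁻¹ * ‖ω‖ + (1 - μ) * ((n : ℝ) - 1) := by
    rw [← abs_norm, ← abs_mul, ← sum_sin_sub_eq_sin_sub_arg_mul_norm]
    have hbound := abs_sum_sin_sub_le_of_equilibrium A hA hAdiag hK θ i (by simpa using heq i)
    rw [Fintype.card_fin] at hbound
    have hω : |ω i| ≤ ‖ω‖ := by simpa using norm_le_pi_norm ω i
    linarith [hdense i, mul_le_mul_of_nonneg_left hω (by positivity : (0 : ℝ) ≤ n * K⁻¹)]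
  rw [le_div_iff₀ (Real.sqrt_pos.2 hpos)]
  exact (mul_le_mul_of_nonneg_left hr (abs_nonneg _)).trans hi

/-- At a stable equilibrium of the Kuramoto model on a μ-dense network, with `ψ` the phase of
the order parameter `r(θ) = Σ_j e^{iθ_j}`, for every `i`:
`|sin(θ_i − ψ)| ≤ (n K⁻¹‖ω‖_∞ + (1 − μ)(n − 1)) / √((2μ − 3/2)n² + 2(1 − μ)n)`. -/
theorem sin_phase_deviation_bound
    (n : ℕ) (hn : 2 ≤ n) (A : Matrix (Fin n) (Fin n) ℝ)
    (hA01 : ∀ i j, A i j = 0 ∨ A i j = 1) (hAsym : A.IsSymm) (hAdiag : ∀ i, A i i = 0)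
    (μ : ℝ) (hμ0 : 0 ≤ μ) (hμ1 : μ ≤ 1)
    (hdense : ∀ i, μ * ((n : ℝ) - 1) ≤ ∑ j, A i j)
    (K : ℝ) (hK : 0 < K) (ω : Fin n → ℝ)
    (θ : Fin n → ℝ)
    (heq : ∀ i, (K / n) * ∑ j, A i j * Real.sin (θ i - θ j) = ω i)
    (hpsd : (kuraJ A θ).PosSemidef)
    (hpos : 0 < (2 * μ - 3 / 2) * (n : ℝ) ^ 2 + 2 * (1 - μ) * n) :
    ∀ i,
      |Real.sin (θ i - (∑ j, Complex.exp ((θ j : ℂ) * Complex.I)).arg)| ≤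
        ((n : ℝ) * K⁻¹ * ‖ω‖ + (1 - μ) * ((n : ℝ) - 1)) /
          Real.sqrt ((2 * μ - 3 / 2) * (n : ℝ) ^ 2 + 2 * (1 - μ) * n) :=
  sin_phase_deviation_bound_general n A hA01 hAdiag μ hdense K hK ω θ heq hpsd hpos
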